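/- Let ℓ be an odd prime and ℒ^r Kummer's differential logarithms on ℤ[ζ_ℓ]. If α ∈ ℝ ∩ ℤ[ζ_ℓ] is real (fixed by complex conjugation) and α ≡ 1 mod (1 − ζ_ℓ), then ℒ^r(α) ≡ 0 (mod ℓ) for every odd r with 1 ≤ r ≤ ℓ − 2. In particular ℒ^r(ε) = 0 for every real unit ε ≡ 1 mod (1−ζ_ℓ). -/

import Mathlib

/-!
Complex conjugation acts on `ℤ[ζ]` as `ζ ↦ ζ^(ℓ-1)`, i.e. on representatives as
`f ↦ f(X^(ℓ-1))`, and substituting `X ↦ X^c` rescales `v ↦ c v` in `f(e^v)`, multiplying `ℒ^r`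
by `c^r`. As `α` is real, `f(X^(ℓ-1)) ≡ f` modulo `Φ_ℓ`, and `Φ_ℓ(e^v) = ∑_{i<ℓ} e^{iv}` has
coefficients divisible by `ℓ` in degrees `≤ ℓ-2` (power sums over `𝔽_ℓ`). Since `f(1) ≡ 1 (mod ℓ)`,
the logarithmic derivatives of `f(e^v)` and `f(e^{(ℓ-1)v})` then agree mod `ℓ` in degrees `< r`,
so `((ℓ-1)^r - 1) ℒ^r(α) ≡ 0`, and `(ℓ-1)^r - 1 ≡ -2` is a unit mod `ℓ` for odd `r`.
-/

open PowerSeries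

/-- Kummer's differential logarithm: for a polynomial `f ∈ ℤ[X]` (representing
`α = f(ζ)`), `kummerL f r` is the `r`-th derivative of `log f(e^v)` at `v = 0`, computed
formally as `(r−1)! · coeff_{r−1} (g'/g)` where `g = f(e^v) ∈ ℚ⟦v⟧`. -/
noncomputable def kummerL (f : Polynomial ℤ) (r : ℕ) : ℚ :=
  ((r - 1).factorial : ℚ) *
    PowerSeries.coeff (R := ℚ) (r - 1)
      (PowerSeries.derivative ℚ (Polynomial.eval₂ (Int.castRingHom (PowerSeries ℚ))
          (PowerSeries.exp ℚ) f) *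
        (Polynomial.eval₂ (Int.castRingHom (PowerSeries ℚ)) (PowerSeries.exp ℚ) f)⁻¹)

/-- `x ≡ 0 (mod ℓ)` for a rational number `x`, in the `ℓ`-adic sense. -/
def RatModCong (ℓ : ℕ) (x : ℚ) : Prop :=
  ∃ a b : ℤ, ¬ (ℓ : ℤ) ∣ b ∧ (b : ℚ) * x = (ℓ : ℚ) * a

open scoped Polynomial

section PadicNorm

variable {ℓ : ℕ} [Fact ℓ.Prime]

lemma padicNorm_factorial_eq_one {n : ℕ} (hn : n < ℓ) : padicNorm ℓ n.factorial = 1 :=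
  (padicNorm.nat_eq_one_iff _).2 fun h => hn.not_ge ((Fact.out : ℓ.Prime).dvd_factorial.1 h)

lemma padicNorm_eq_one_of_dvd_sub_one {m : ℤ} (h : (ℓ : ℤ) ∣ m - 1) :
    padicNorm ℓ m = 1 := by
  rw [padicNorm.int_eq_one_iff]
  intro hm
  exact (Fact.out : ℓ.Prime).not_dvd_one (Int.natCast_dvd_natCast.1 (by simpa using dvd_sub hm h))

lemma RatModCong.of_padicNorm_lt_one {x : ℚ} (hx : padicNorm ℓ x < 1) : RatModCong ℓ x := by
  have hnum : (ℓ : ℤ) ∣ x.num := by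
    rw [← padicNorm.int_lt_one_iff, ← Rat.mul_den_eq_num, padicNorm.mul]
    calc padicNorm ℓ x * padicNorm ℓ x.den ≤ padicNorm ℓ x * 1 :=
          mul_le_mul_of_nonneg_left (padicNorm.of_nat _) (padicNorm.nonneg _)
      _ < 1 := by rwa [mul_one]
  have hden : ¬ (ℓ : ℤ) ∣ x.den := fun hden =>
    (Fact.out : ℓ.Prime).one_lt.ne' <| Nat.eq_one_of_dvd_coprimes x.reduced
      (Int.natCast_dvd.1 hnum) (Int.natCast_dvd_natCast.1 hden)
  obtain ⟨a, ha⟩ := hnum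
  exact ⟨a, x.den, hden, by push_cast; rw [Rat.den_mul_eq_num, ha]; push_cast; ring⟩

lemma padicNorm_natCast_pred_pow_sub_one {r : ℕ} (hr : Odd r) (hℓ : ℓ ≠ 2) :
    padicNorm ℓ (((ℓ - 1 : ℕ) : ℚ) ^ r - 1) = 1 := by
  have h := (padicNorm.int_eq_one_iff (p := ℓ) (((ℓ - 1 : ℕ) : ℤ) ^ r - 1)).2 ?_
  · exact_mod_cast h
  rw [← ZMod.intCast_zmod_eq_zero_iff_dvd]
  have hℓ1 : 1 ≤ ℓ := (Fact.out : ℓ.Prime).one_lt.le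
  push_cast [Nat.cast_sub hℓ1, ZMod.natCast_self, zero_sub, hr.neg_one_pow]
  rw [show (-1 - 1 : ZMod ℓ) = -((2 : ℕ) : ZMod ℓ) by push_cast; ring, neg_eq_zero,
    ZMod.natCast_eq_zero_iff]
  exact fun h => hℓ ((Nat.prime_dvd_prime_iff_eq Fact.out Nat.prime_two).1 h)

end PadicNorm

section Cyclotomic

open Polynomial

lemma cyclotomic_dvd_of_aeval_eq_zero {K : Type*} [Field K] [CharZero K] {ζ : K} {n : ℕ}
    (hζ : IsPrimitiveRoot ζ n) (hn : 0 < n) {p : ℤ[X]} (hp : aeval ζ p = 0) :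
    cyclotomic n ℤ ∣ p := by
  rw [cyclotomic_eq_minpoly hζ hn]
  exact minpoly.isIntegrallyClosed_dvd (hζ.isIntegral hn) hp

lemma prime_dvd_eval_one_of_aeval_eq_zero {K : Type*} [Field K] [CharZero K] {ζ : K} {ℓ : ℕ}
    [Fact ℓ.Prime] (hζ : IsPrimitiveRoot ζ ℓ) {p : ℤ[X]} (hp : aeval ζ p = 0) :
    (ℓ : ℤ) ∣ p.eval 1 := by
  obtain ⟨q, rfl⟩ := cyclotomic_dvd_of_aeval_eq_zero hζ (Fact.out : ℓ.Prime).pos hp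
  rw [eval_mul, eval_one_cyclotomic_prime]
  exact dvd_mul_right _ _

lemma conj_aeval_eq_aeval_comp_X_pow {ζ : ℂ} {n : ℕ} (hζ : IsPrimitiveRoot ζ n) (hn : n ≠ 0)
    (p : ℤ[X]) :
    starRingEnd ℂ (aeval ζ p) = aeval ζ (p.comp (Polynomial.X ^ (n - 1))) := by
  have hconj : starRingEnd ℂ ζ = ζ ^ (n - 1) := by
    rw [← Complex.inv_eq_conj (hζ.norm'_eq_one hn), eq_comm]
    exact eq_inv_of_mul_eq_one_left (by rw [pow_sub_one_mul hn, hζ.pow_eq_one])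
  rw [aeval_comp, map_pow, aeval_X, ← hconj]
  exact (aeval_algHom_apply (starRingEnd ℂ).toIntAlgHom ζ p).symm

end Cyclotomic

/-- Truncation at `N` is essential: `exp` has `ℓ`-integral coefficients only below degree `ℓ`. -/
def CoeffBound (ℓ N : ℕ) (c : ℚ) (A : ℚ⟦X⟧) : Prop :=
  ∀ n ≤ N, padicNorm ℓ (coeff n A) ≤ c

namespace CoeffBound

variable {ℓ N : ℕ} {c d : ℚ} {A B : ℚ⟦X⟧}

lemma nonneg (h : CoeffBound ℓ N c A) : 0 ≤ c :=
  (padicNorm.nonneg _).trans (h 0 N.zero_le)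

lemma mono {M : ℕ} (h : CoeffBound ℓ N c A) (hcd : c ≤ d) (hMN : M ≤ N) : CoeffBound ℓ M d A :=
  fun n hn => (h n (hn.trans hMN)).trans hcd

variable [Fact ℓ.Prime]

lemma sub (hA : CoeffBound ℓ N c A) (hB : CoeffBound ℓ N c B) : CoeffBound ℓ N c (A - B) :=
  fun n hn => by
    rw [map_sub]
    exact padicNorm.sub.trans (max_le (hA n hn) (hB n hn))

lemma mul (hA : CoeffBound ℓ N c A) (hB : CoeffBound ℓ N d B) : CoeffBound ℓ N (c * d) (A * B) :=
  fun n hn => by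
    rw [coeff_mul]
    refine padicNorm.sum_le' (fun ij hij => ?_) (mul_nonneg hA.nonneg hB.nonneg)
    have hij := Finset.HasAntidiagonal.mem_antidiagonal.1 hij
    rw [padicNorm.mul]
    exact mul_le_mul (hA _ (by omega)) (hB _ (by omega)) (padicNorm.nonneg _) hA.nonneg

lemma derivative (hA : CoeffBound ℓ (N + 1) c A) : CoeffBound ℓ N c (d⁄dX ℚ A) :=
  fun n hn => by
    rw [coeff_derivative, padicNorm.mul]
    calc _ ≤ c * 1 := mul_le_mul (hA _ (by omega)) (by exact_mod_cast padicNorm.of_nat (n + 1))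
            (padicNorm.nonneg _) hA.nonneg
      _ = c := mul_one c

lemma inv (hA : CoeffBound ℓ N 1 A) (hA0 : padicNorm ℓ (constantCoeff A) = 1) :
    CoeffBound ℓ N 1 A⁻¹ := by
  intro n
  induction n using Nat.strong_induction_on with
  | _ n ih =>
    intro hn
    have hinv : padicNorm ℓ (constantCoeff A)⁻¹ = 1 := by
      rw [← one_div, padicNorm.div, hA0, padicNorm.one, div_one]
    rw [coeff_inv]
    split_ifs with h
    · exact hinv.le
    · rw [padicNorm.mul, padicNorm.neg, hinv, one_mul]
      refine padicNorm.sum_le' (fun ij hij => ?_) zero_le_one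
      have hij := Finset.HasAntidiagonal.mem_antidiagonal.1 hij
      split_ifs with hj
      · rw [padicNorm.mul, ← one_mul 1]
        exact mul_le_mul (hA _ (by omega)) (ih _ hj (by omega)) (padicNorm.nonneg _) zero_le_one
      · simp

lemma derivative_mul_inv_sub (hA : CoeffBound ℓ (N + 1) 1 A) (hB : CoeffBound ℓ (N + 1) 1 B)
    (hA0 : padicNorm ℓ (constantCoeff A) = 1) (hB0 : padicNorm ℓ (constantCoeff B) = 1)
    (hBA : CoeffBound ℓ (N + 1) c (B - A)) :
    CoeffBound ℓ N c (d⁄dX ℚ B * B⁻¹ - d⁄dX ℚ A * A⁻¹) := by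
  have hAinv : A * A⁻¹ = 1 :=
    PowerSeries.mul_inv_cancel _ fun h => by simp [h] at hA0
  have hBinv : B * B⁻¹ = 1 :=
    PowerSeries.mul_inv_cancel _ fun h => by simp [h] at hB0
  have key : d⁄dX ℚ B * B⁻¹ - d⁄dX ℚ A * A⁻¹ =
      (d⁄dX ℚ (B - A) * A - (B - A) * d⁄dX ℚ A) * (A⁻¹ * B⁻¹) := by
    rw [map_sub]
    linear_combination (d⁄dX ℚ A * A⁻¹) * hBinv - (d⁄dX ℚ B * B⁻¹) * hAinv
  have hA' := hA.mono le_rfl N.le_succ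
  have hdiff := ((hBA.derivative.mul hA').sub ((hBA.mono le_rfl N.le_succ).mul hA.derivative)).mul
    ((hA'.inv hA0).mul ((hB.mono le_rfl N.le_succ).inv hB0))
  rw [key]
  simpa only [mul_one] using hdiff

end CoeffBound

noncomputable def evalExp : ℤ[X] →+* ℚ⟦X⟧ :=
  Polynomial.eval₂RingHom (Int.castRingHom ℚ⟦X⟧) (exp ℚ)

lemma evalExp_X_pow (i : ℕ) : evalExp (Polynomial.X ^ i) = rescale (i : ℚ) (exp ℚ) := by
  rw [map_pow, evalExp, Polynomial.coe_eval₂RingHom, Polynomial.eval₂_X, exp_pow_eq_rescale_exp]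

lemma coeff_evalExp (p : ℤ[X]) (n : ℕ) :
    coeff n (evalExp p) = (p.sum fun i a => a * i ^ n : ℤ) / n.factorial := by
  conv_lhs => rw [p.as_sum_support_C_mul_X_pow]
  rw [map_sum, map_sum, Polynomial.sum_def, Int.cast_sum, Finset.sum_div]
  refine Finset.sum_congr rfl fun i _ => ?_
  rw [map_mul, evalExp_X_pow, evalExp, Polynomial.coe_eval₂RingHom, Polynomial.eval₂_C]
  rw [eq_intCast, ← map_intCast (C (R := ℚ)), coeff_C_mul, coeff_rescale, coeff_exp, eq_ratCast,
    Rat.cast_id]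
  push_cast
  ring

lemma constantCoeff_evalExp (p : ℤ[X]) : constantCoeff (evalExp p) = p.eval 1 := by
  rw [evalExp, Polynomial.coe_eval₂RingHom, Polynomial.hom_eval₂, constantCoeff_exp,
    RingHom.ext_int (constantCoeff.comp (Int.castRingHom ℚ⟦X⟧)) (Int.castRingHom ℚ),
    Polynomial.eval₂_at_one, eq_intCast]

lemma evalExp_comp_X_pow (p : ℤ[X]) (c : ℕ) :
    evalExp (p.comp (Polynomial.X ^ c)) = rescale (c : ℚ) (evalExp p) := by
  rw [evalExp, Polynomial.coe_eval₂RingHom, Polynomial.eval₂_comp, Polynomial.eval₂_X_pow,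
    exp_pow_eq_rescale_exp, Polynomial.hom_eval₂,
    RingHom.ext_int ((rescale (c : ℚ)).comp (Int.castRingHom ℚ⟦X⟧)) (Int.castRingHom ℚ⟦X⟧)]

section Bounds

variable {ℓ N : ℕ} [Fact ℓ.Prime]

lemma coeffBound_evalExp (p : ℤ[X]) (hN : N < ℓ) : CoeffBound ℓ N 1 (evalExp p) := fun n hn => by
  rw [coeff_evalExp, padicNorm.div, padicNorm_factorial_eq_one (by omega), div_one]
  exact padicNorm.of_int _

lemma prime_dvd_sum_range_pow {n : ℕ} (hn : n < ℓ - 1) :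
    (ℓ : ℤ) ∣ ∑ i ∈ Finset.range ℓ, (i : ℤ) ^ n := by
  rw [← ZMod.intCast_zmod_eq_zero_iff_dvd]
  push_cast
  refine (Finset.sum_nbij' (fun i : ℕ => (i : ZMod ℓ)) ZMod.val (fun _ _ => Finset.mem_univ _)
    (fun a _ => Finset.mem_range.2 a.val_lt)
    (fun a ha => ZMod.val_cast_of_lt (Finset.mem_range.1 ha))
    (fun a _ => ZMod.natCast_zmod_val a) (fun _ _ => rfl)).trans ?_
  exact FiniteField.sum_pow_lt_card_sub_one (K := ZMod ℓ) n (by rwa [ZMod.card])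

lemma coeffBound_evalExp_cyclotomic :
    CoeffBound ℓ (ℓ - 2) (ℓ : ℚ)⁻¹ (evalExp (Polynomial.cyclotomic ℓ ℤ)) := fun n hn => by
  have hℓ := (Fact.out : ℓ.Prime).two_le
  have hcoeff : coeff n (evalExp (Polynomial.cyclotomic ℓ ℤ)) =
      ((∑ i ∈ Finset.range ℓ, (i : ℤ) ^ n : ℤ) : ℚ) / n.factorial := by
    simp only [Polynomial.cyclotomic_prime, map_sum, evalExp_X_pow, coeff_rescale, coeff_exp]
    push_cast
    simp [div_eq_mul_inv, Finset.sum_mul]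
  obtain ⟨k, hk⟩ := prime_dvd_sum_range_pow (ℓ := ℓ) (n := n) (by omega)
  rw [hcoeff, hk, padicNorm.div, padicNorm_factorial_eq_one (by omega), div_one, Int.cast_mul,
    Int.cast_natCast, padicNorm.mul, padicNorm.padicNorm_p_of_prime]
  exact mul_le_of_le_one_right (by positivity) (padicNorm.of_int k)

end Bounds

section Rescale

variable {k : Type*} [Field k]

lemma derivative_rescale {R : Type*} [CommRing R] (a : R) (A : R⟦X⟧) :
    d⁄dX R (rescale a A) = C a * rescale a (d⁄dX R A) := by
  ext n
  rw [coeff_derivative, coeff_rescale, coeff_C_mul, coeff_rescale, coeff_derivative, pow_succ]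
  ring

lemma rescale_inv (a : k) (A : k⟦X⟧) : rescale a A⁻¹ = (rescale a A)⁻¹ := by
  have h0 : constantCoeff (rescale a A) = constantCoeff A := by
    rw [← coeff_zero_eq_constantCoeff_apply, coeff_rescale, pow_zero, one_mul,
      coeff_zero_eq_constantCoeff_apply]
  by_cases hA : constantCoeff A = 0
  · rw [PowerSeries.inv_eq_zero.2 hA, PowerSeries.inv_eq_zero.2 (h0.trans hA), map_zero]
  · rw [PowerSeries.eq_inv_iff_mul_eq_one (by rwa [h0]), ← map_mul, PowerSeries.inv_mul_cancel _ hA,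
      map_one]

lemma coeff_derivative_mul_inv_rescale (a : k) (A : k⟦X⟧) (n : ℕ) :
    coeff n (d⁄dX k (rescale a A) * (rescale a A)⁻¹) = a ^ (n + 1) * coeff n (d⁄dX k A * A⁻¹) := by
  rw [derivative_rescale, ← rescale_inv, mul_assoc, ← map_mul, coeff_C_mul, coeff_rescale,
    ← mul_assoc, pow_succ']

end Rescale

lemma kummerL_eq (f : ℤ[X]) (r : ℕ) :
    kummerL f r = (r - 1).factorial * coeff (r - 1) (d⁄dX ℚ (evalExp f) * (evalExp f)⁻¹) := rfl

lemma kummerL_comp_X_pow (f : ℤ[X]) (c : ℕ) {r : ℕ} (hr : 1 ≤ r) :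
    kummerL (f.comp (Polynomial.X ^ c)) r = c ^ r * kummerL f r := by
  rw [kummerL_eq, kummerL_eq, evalExp_comp_X_pow, coeff_derivative_mul_inv_rescale,
    Nat.sub_add_cancel hr]
  ring

lemma padicNorm_kummerL_sub_lt_one {ℓ : ℕ} [Fact ℓ.Prime] {f g : ℤ[X]} {r : ℕ}
    (hr1 : 1 ≤ r) (hr : r ≤ ℓ - 2) (hfg : Polynomial.cyclotomic ℓ ℤ ∣ g - f)
    (hf : padicNorm ℓ (f.eval 1 : ℤ) = 1) (hg : padicNorm ℓ (g.eval 1 : ℤ) = 1) :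
    padicNorm ℓ (kummerL g r - kummerL f r) < 1 := by
  obtain ⟨q, hq⟩ := hfg
  have hr' : r - 1 + 1 < ℓ := by omega
  have hgf : CoeffBound ℓ (r - 1 + 1) (ℓ : ℚ)⁻¹ (evalExp g - evalExp f) := by
    rw [← map_sub, hq, map_mul, ← mul_one (ℓ : ℚ)⁻¹]
    exact (coeffBound_evalExp_cyclotomic.mono le_rfl (by omega)).mul (coeffBound_evalExp q hr')
  have hsmall := CoeffBound.derivative_mul_inv_sub (coeffBound_evalExp f hr')
    (coeffBound_evalExp g hr') (by rwa [constantCoeff_evalExp]) (by rwa [constantCoeff_evalExp])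
    hgf (r - 1) le_rfl
  rw [kummerL_eq, kummerL_eq, ← mul_sub, ← map_sub, padicNorm.mul,
    padicNorm_factorial_eq_one (by omega), one_mul]
  exact hsmall.trans_lt (inv_lt_one_of_one_lt₀ (by exact_mod_cast (Fact.out : ℓ.Prime).one_lt))

theorem kummerL_real_vanishes_general (ℓ : ℕ) (hℓ : ℓ.Prime)
    (ζ : ℂ) (hζ : IsPrimitiveRoot ζ ℓ)
    (f : Polynomial ℤ)
    (hfcong : ∃ u : Polynomial ℤ,
      Polynomial.aeval ζ f - 1 = (1 - ζ) * Polynomial.aeval ζ u)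
    (hreal : (starRingEnd ℂ) (Polynomial.aeval ζ f) = Polynomial.aeval ζ f)
    (r : ℕ) (hrodd : Odd r) (hr2 : r ≤ ℓ - 2) :
    RatModCong ℓ (kummerL f r) := by
  have : Fact ℓ.Prime := ⟨hℓ⟩
  have hr1 : 1 ≤ r := hrodd.pos
  set fσ := f.comp (Polynomial.X ^ (ℓ - 1))
  have hσ : Polynomial.cyclotomic ℓ ℤ ∣ fσ - f := by
    refine cyclotomic_dvd_of_aeval_eq_zero hζ hℓ.pos ?_
    rw [map_sub, ← conj_aeval_eq_aeval_comp_X_pow hζ hℓ.ne_zero, hreal, sub_self]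
  have hf1 : padicNorm ℓ (f.eval 1 : ℤ) = 1 := by
    obtain ⟨u, hu⟩ := hfcong
    have hdvd := prime_dvd_eval_one_of_aeval_eq_zero (p := f - 1 - (1 - Polynomial.X) * u) hζ
      (by simp only [map_sub, map_mul, map_one, Polynomial.aeval_X]; linear_combination hu)
    exact padicNorm_eq_one_of_dvd_sub_one (by simpa using hdvd)
  have hfσ1 : fσ.eval 1 = f.eval 1 := by simp [fσ, Polynomial.eval_comp]
  have hL := padicNorm_kummerL_sub_lt_one hr1 hr2 hσ hf1 (by rwa [hfσ1])
  rw [kummerL_comp_X_pow f _ hr1, ← sub_one_mul, padicNorm.mul,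
    padicNorm_natCast_pred_pow_sub_one hrodd (by omega), one_mul] at hL
  exact RatModCong.of_padicNorm_lt_one hL

/-- Kummer's differential logarithms vanish on real elements for odd `r`:
if `α = f(ζ) ∈ ℤ[ζ]` is fixed by complex conjugation and `α ≡ 1 mod (1 − ζ)`, then
`ℒ^r(α) ≡ 0 (mod ℓ)` for every odd `r` with `1 ≤ r ≤ ℓ − 2`. -/
theorem kummerL_real_vanishes (ℓ : ℕ) (hℓ : ℓ.Prime) (hodd : ℓ ≠ 2)
    (ζ : ℂ) (hζ : IsPrimitiveRoot ζ ℓ)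
    (f : Polynomial ℤ) (hf1 : Polynomial.eval 1 f ≠ 0)
    (hfcong : ∃ u : Polynomial ℤ,
      Polynomial.aeval ζ f - 1 = (1 - ζ) * Polynomial.aeval ζ u)
    (hreal : (starRingEnd ℂ) (Polynomial.aeval ζ f) = Polynomial.aeval ζ f)
    (r : ℕ) (hrodd : Odd r) (hr1 : 1 ≤ r) (hr2 : r ≤ ℓ - 2) :
    RatModCong ℓ (kummerL f r) :=
  kummerL_real_vanishes_general ℓ hℓ ζ hζ f hfcong hreal r hrodd hr2
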